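/- Let P be a point set and i₀ an index such that P is a weak (ε_{2^i}, 2)-uniform noisy sample of a compact set K for all i > i₀, and a (genuine) (ε_{2^{i₀}}, 2)-uniform noisy sample of K. Then the output P₀ of Algorithm ParfreeDeclutter(P) satisfies δ_H(P₀, K) ≤ (87 + 16√2) ε_{2^{i₀}}. -/

import Mathlib

open Metric

/-- Core loop of the Declutter algorithm: scan the (pre-sorted) list, keeping a point `p`
iff no previously kept point lies in the open ball `B(p, 2 f p)` (w.r.t. distance `d`). -/
noncomputable def declutterAux {X : Type*} (d : X → X → ℝ) (f : X → ℝ) :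
    List X → List X → List X
  | Q, [] => Q
  | Q, p :: rest =>
    if ∀ q ∈ Q, 2 * f p ≤ d p q then declutterAux d f (Q ++ [p]) rest
    else declutterAux d f Q rest

noncomputable def declutter {X : Type*} (d : X → X → ℝ) (f : X → ℝ) (L : List X) : List X :=
  declutterAux d f [] L

/-- `Q` is a possible output of the Declutter algorithm on `P`, with robust distance
function `f`: the points of `P` are processed in nondecreasing order of `f`
(ties broken arbitrarily). -/
def IsDeclutterOutput {X : Type*} (d : X → X → ℝ) (f : X → ℝ) (P : Finset X)
    (Q : List X) : Prop :=
  ∃ L : List X, L.Perm P.toList ∧ L.Pairwise (fun a b => f a ≤ f b) ∧ Q = declutter d f L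

variable {X : Type*} [MetricSpace X]

/-- Sorted (nondecreasing) list of distances from `x` to the points of `P`. -/
noncomputable def sortedDists (P : Finset X) (x : X) : List ℝ :=
  (P.val.map (dist x)).sort (· ≤ ·)

/-- The k-distance: root mean square of the distances to the k nearest neighbors in `P`. -/
noncomputable def kdist (P : Finset X) (k : ℕ) (x : X) : ℝ :=
  Real.sqrt ((1 / (k : ℝ)) * (((sortedDists P x).take k).map (fun r => r ^ 2)).sum)

/-- `P` is an ε_k-noisy sample of `K`:
(1) the k-distance is at most ε on `K`; (2) every point of the space is within
`kdist + ε` of `K`. -/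
def NoisySample (P : Finset X) (k : ℕ) (K : Set X) (ε : ℝ) : Prop :=
  (∀ x ∈ K, kdist P k x ≤ ε) ∧ ∀ x : X, infDist x K ≤ kdist P k x + ε

open scoped Classical in
/-- One iteration of the ParfreeDeclutter loop: `P'` is obtained from `P` by decluttering
with parameter `k` and then resampling all points of `P` within distance
`C · d_{P,k}(q)` of some kept point `q`, with resampling constant `C = 10 + 2√2`. -/
def IsParfreeStep (P P' : Finset X) (k : ℕ) : Prop :=
  ∃ Q : List X, IsDeclutterOutput (fun a b => dist a b) (kdist P k) P Q ∧
    P' = P.filter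
      (fun p => ∃ q ∈ Q, dist p q ≤ (10 + 2 * Real.sqrt 2) * kdist P k q)

/-!
The `k`-distance is the root mean square of the `k` smallest distances, so counting points in
balls controls it: it is `1`-Lipschitz, it can only grow on a subset, it does not change when
only points beyond the `k`-th neighbour are removed, and by Markov's inequality half of the `k`
nearest neighbours lie within `√2` times it.

From `i*` down to `i₀` every round keeps, for each `x ∈ K`, all `2^(i-1)` nearest neighbours of
`x` in `P`: some decluttered point `q` lies within `5ε` of `x`, uniformity gives `d(q) ≥ ε/2`, and
the resampling radius `(10 + 2√2) d(q)` then covers the `√2ε`-ball around `x`. At level `i₀`,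
condition (2) together with the separation of decluttered points forces `d(q) ≤ 6ε` for every
kept `q`, which bounds the distance from every surviving point to `K`. Below `i₀`, follow a point
`c` with `2^j` points of `P_j` within `ρ` of it: either this whole ball survives, or the kept
point covering `c` has a ball at least three times smaller, so `dist(x, c) + 3ρ` never increases.
-/

open Finset

theorem Real.sqrt_sum_add_sq_le {ι : Type*} (s : Finset ι) (f g : ι → ℝ) :
    √(∑ i ∈ s, (f i + g i) ^ 2) ≤ √(∑ i ∈ s, f i ^ 2) + √(∑ i ∈ s, g i ^ 2) := by
  have hf := Real.sq_sqrt (sum_nonneg (s := s) fun i _ => sq_nonneg (f i))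
  have hg := Real.sq_sqrt (sum_nonneg (s := s) fun i _ => sq_nonneg (g i))
  have hcs := Real.sum_mul_le_sqrt_mul_sqrt s f g
  have hexpand : ∑ i ∈ s, (f i + g i) ^ 2
      = ∑ i ∈ s, f i ^ 2 + 2 * ∑ i ∈ s, f i * g i + ∑ i ∈ s, g i ^ 2 := by
    simp only [add_sq, sum_add_distrib, mul_sum, mul_assoc]
  refine Real.sqrt_le_iff.mpr ⟨by positivity, ?_⟩
  rw [hexpand]
  nlinarith

theorem Real.sqrt_mean_sq_le_of_le_add {ι : Type*} (s : Finset ι) {k : ℕ} (hk : #s ≤ k)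
    {a b : ι → ℝ} {d : ℝ} (hd : 0 ≤ d) (ha : ∀ i ∈ s, 0 ≤ a i)
    (hab : ∀ i ∈ s, a i ≤ b i + d) :
    √((1 / k) * ∑ i ∈ s, a i ^ 2) ≤ √((1 / k) * ∑ i ∈ s, b i ^ 2) + d := by
  have hsq : ∑ i ∈ s, a i ^ 2 ≤ ∑ i ∈ s, (b i + d) ^ 2 :=
    sum_le_sum fun i hi => pow_le_pow_left₀ (ha i hi) (hab i hi) 2
  have hconst : √(1 / k) * √(∑ _i ∈ s, d ^ 2) ≤ d := by
    rw [← Real.sqrt_mul (by positivity), sum_const, nsmul_eq_mul,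
      show 1 / (k : ℝ) * (#s * d ^ 2) = #s / k * d ^ 2 by ring,
      Real.sqrt_mul' _ (sq_nonneg d), Real.sqrt_sq hd]
    have : (#s : ℝ) / k ≤ 1 := div_le_one_of_le₀ (by exact_mod_cast hk) (by positivity)
    calc √(#s / k) * d ≤ 1 * d := by gcongr; exact Real.sqrt_le_one.mpr this
      _ = d := one_mul d
  calc √((1 / k) * ∑ i ∈ s, a i ^ 2)
      ≤ √(1 / k) * √(∑ i ∈ s, (b i + d) ^ 2) := by
        rw [← Real.sqrt_mul (by positivity)]; gcongr
    _ ≤ √(1 / k) * (√(∑ i ∈ s, b i ^ 2) + √(∑ _i ∈ s, d ^ 2)) := by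
        gcongr; exact Real.sqrt_sum_add_sq_le s b fun _ => d
    _ ≤ √((1 / k) * ∑ i ∈ s, b i ^ 2) + d := by
        rw [mul_add, Real.sqrt_mul (by positivity)]; linarith

theorem List.sum_map_eq_sum_range_getD {α M : Type*} [AddCommMonoid M] (L : List α) (a : α)
    (f : α → M) : (L.map f).sum = ∑ i ∈ Finset.range L.length, f (L.getD i a) := by
  rw [← Fin.sum_univ_fun_getElem, ← Fin.sum_univ_eq_sum_range]
  simp

theorem List.Pairwise.getElem_le_iff_lt_countP {α : Type*} [LinearOrder α] {L : List α}
    (hL : L.Pairwise (· ≤ ·)) {i : ℕ} (hi : i < L.length) (r : α) :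
    L[i] ≤ r ↔ i < L.countP (· ≤ r) := by
  have hsplit : L = L.take i ++ L[i] :: L.drop (i + 1) := by
    rw [← List.drop_eq_getElem_cons hi, List.take_append_drop]
  have hL' := hsplit ▸ hL
  rw [List.pairwise_append, List.pairwise_cons] at hL'
  obtain ⟨-, ⟨hright, -⟩, hcross⟩ := hL'
  have hlen : (L.take i).length = i := List.length_take_of_le hi.le
  have hcount : L.countP (· ≤ r) = (L.take i).countP (· ≤ r)
      + ((L.drop (i + 1)).countP (· ≤ r) + if L[i] ≤ r then 1 else 0) := by
    conv_lhs => rw [hsplit]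
    simp only [List.countP_append, List.countP_cons, decide_eq_true_eq]
  rw [hcount]
  constructor
  · intro hr
    have : (L.take i).countP (· ≤ r) = i := by
      rw [List.countP_eq_length.mpr fun a ha => by
        simpa using (hcross a ha _ List.mem_cons_self).trans hr, hlen]
    simp [this, hr]
  · intro hlt
    by_contra hr
    have hzero : (L.drop (i + 1)).countP (· ≤ r) = 0 :=
      List.countP_eq_zero.mpr fun b hb => by
        simpa using lt_of_lt_of_le (not_le.mp hr) (hright b hb)
    have := (L.take i).countP_le_length (p := (· ≤ r))
    simp [hzero, hr] at hlt
    omega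

section KDistance

noncomputable def nearCount (P : Finset X) (x : X) (r : ℝ) : ℕ := #{p ∈ P | dist x p ≤ r}

/-- The distance from `x` to its `k`-th nearest neighbour in `P` (`1`-indexed); the junk value
for `k = 0` is the nearest distance, and for `k > #P` it is `0`. -/
noncomputable def knnDist (P : Finset X) (k : ℕ) (x : X) : ℝ := (sortedDists P x).getD (k - 1) 0

variable {P P' : Finset X} {k : ℕ} {x y : X}

theorem length_sortedDists (P : Finset X) (x : X) : (sortedDists P x).length = #P := by
  simp [sortedDists]

theorem pairwise_sortedDists (P : Finset X) (x : X) : (sortedDists P x).Pairwise (· ≤ ·) :=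
  Multiset.pairwise_sort _ _

theorem countP_sortedDists (P : Finset X) (x : X) (r : ℝ) :
    (sortedDists P x).countP (· ≤ r) = nearCount P x r := by
  rw [← Multiset.coe_countP, sortedDists, Multiset.sort_eq, Multiset.countP_map, nearCount,
    ← Finset.filter_val]
  rfl

theorem nearCount_le_card (P : Finset X) (x : X) (r : ℝ) : nearCount P x r ≤ #P :=
  card_filter_le _ _

theorem nearCount_mono {r r' : ℝ} (hr : r ≤ r') : nearCount P x r ≤ nearCount P x r' :=
  card_le_card fun _ hp => by
    rw [mem_filter] at hp ⊢
    exact ⟨hp.1, hp.2.trans hr⟩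

theorem nearCount_mono_set (h : P' ⊆ P) (x : X) (r : ℝ) : nearCount P' x r ≤ nearCount P x r :=
  card_le_card (filter_subset_filter _ h)

theorem nearCount_le_nearCount_add_dist (P : Finset X) (x y : X) (r : ℝ) :
    nearCount P x r ≤ nearCount P y (r + dist x y) :=
  card_le_card fun p hp => by
    rw [mem_filter] at hp ⊢
    refine ⟨hp.1, ?_⟩
    linarith [dist_triangle y x p, dist_comm x y]

theorem knnDist_eq_getElem (hk : 1 ≤ k) (hkP : k ≤ #P) :
    knnDist P k x = (sortedDists P x)[k - 1]'(by rw [length_sortedDists]; omega) :=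
  List.getD_eq_getElem _ _ _

theorem knnDist_le_iff (hk : 1 ≤ k) (hkP : k ≤ #P) (r : ℝ) :
    knnDist P k x ≤ r ↔ k ≤ nearCount P x r := by
  rw [knnDist_eq_getElem hk hkP, (pairwise_sortedDists P x).getElem_le_iff_lt_countP,
    countP_sortedDists]
  omega

theorem le_nearCount_knnDist (hkP : k ≤ #P) : k ≤ nearCount P x (knnDist P k x) := by
  rcases Nat.eq_zero_or_pos k with rfl | hk
  · exact Nat.zero_le _
  · exact (knnDist_le_iff hk hkP _).mp le_rfl

theorem knnDist_mono {k' : ℕ} (hk : 1 ≤ k) (hkk' : k ≤ k') (hk'P : k' ≤ #P) :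
    knnDist P k x ≤ knnDist P k' x :=
  (knnDist_le_iff hk (hkk'.trans hk'P) _).mpr (hkk'.trans (le_nearCount_knnDist hk'P))

theorem knnDist_nonneg (P : Finset X) (k : ℕ) (x : X) : 0 ≤ knnDist P k x := by
  rw [knnDist]
  rcases lt_or_ge (k - 1) (sortedDists P x).length with h | h
  · rw [List.getD_eq_getElem _ _ h]
    obtain ⟨p, -, hp⟩ := Multiset.mem_map.mp
      ((Multiset.mem_sort _).mp (List.getElem_mem h))
    exact hp ▸ dist_nonneg
  · rw [List.getD_eq_default _ _ h]

theorem exists_dist_le_knnDist (hk : 1 ≤ k) (hkP : k ≤ #P) :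
    ∃ p ∈ P, dist x p ≤ knnDist P k x := by
  obtain ⟨p, hp⟩ := card_pos.mp (Nat.lt_of_lt_of_le hk (le_nearCount_knnDist (x := x) hkP))
  exact ⟨p, (mem_filter.mp hp).1, (mem_filter.mp hp).2⟩

theorem kdist_eq_sqrt_sum_sq_knnDist (P : Finset X) (k : ℕ) (x : X) :
    kdist P k x = √((1 / k) * ∑ l ∈ range (min k #P), knnDist P (l + 1) x ^ 2) := by
  rw [kdist, List.sum_map_eq_sum_range_getD _ 0, List.length_take, length_sortedDists]
  congr 2
  refine sum_congr rfl fun l hl => ?_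
  have hl : l < min k #P := mem_range.mp hl
  rw [List.getD_eq_getElem _ _ (by simpa [length_sortedDists] using hl), List.getElem_take,
    knnDist, Nat.add_sub_cancel, List.getD_eq_getElem]

theorem kdist_nonneg (P : Finset X) (k : ℕ) (x : X) : 0 ≤ kdist P k x := Real.sqrt_nonneg _

theorem sum_sq_knnDist_eq (hkP : k ≤ #P) :
    ∑ l ∈ range k, knnDist P (l + 1) x ^ 2 = k * kdist P k x ^ 2 := by
  rcases Nat.eq_zero_or_pos k with rfl | hk
  · simp
  rw [kdist_eq_sqrt_sum_sq_knnDist, min_eq_left hkP,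
    Real.sq_sqrt (by positivity)]
  field_simp

theorem kdist_le_knnDist (hk : 1 ≤ k) (hkP : k ≤ #P) : kdist P k x ≤ knnDist P k x := by
  have hsum : ∑ l ∈ range k, knnDist P (l + 1) x ^ 2 ≤ #(range k) • knnDist P k x ^ 2 :=
    sum_le_card_nsmul _ _ _ fun l hl => pow_le_pow_left₀ (knnDist_nonneg P _ x)
      (knnDist_mono (by omega) (mem_range.mp hl) hkP) 2
  rw [sum_sq_knnDist_eq hkP, card_range, nsmul_eq_mul] at hsum
  have hk0 : (0 : ℝ) < k := by exact_mod_cast hk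
  exact (pow_le_pow_iff_left₀ (kdist_nonneg P k x) (knnDist_nonneg P k x) two_ne_zero).mp
    (le_of_mul_le_mul_left hsum hk0)

theorem kdist_le_of_le_nearCount {r : ℝ} (hk : 1 ≤ k) (h : k ≤ nearCount P x r) :
    kdist P k x ≤ r :=
  have hkP : k ≤ #P := h.trans (nearCount_le_card P x r)
  (kdist_le_knnDist hk hkP).trans ((knnDist_le_iff hk hkP r).mpr h)

theorem knnDist_one_le_kdist (hk : 1 ≤ k) (hkP : k ≤ #P) : knnDist P 1 x ≤ kdist P k x := by
  have hsum : #(range k) • knnDist P 1 x ^ 2 ≤ ∑ l ∈ range k, knnDist P (l + 1) x ^ 2 :=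
    card_nsmul_le_sum _ _ _ fun l hl => pow_le_pow_left₀ (knnDist_nonneg P 1 x)
      (knnDist_mono le_rfl (by omega) (by have := mem_range.mp hl; omega)) 2
  rw [sum_sq_knnDist_eq hkP, card_range, nsmul_eq_mul] at hsum
  have hk0 : (0 : ℝ) < k := by exact_mod_cast hk
  exact (pow_le_pow_iff_left₀ (knnDist_nonneg P 1 x) (kdist_nonneg P k x) two_ne_zero).mp
    (le_of_mul_le_mul_left hsum hk0)

theorem exists_dist_le_kdist (hk : 1 ≤ k) (hkP : k ≤ #P) : ∃ p ∈ P, dist x p ≤ kdist P k x :=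
  let ⟨p, hp, hpx⟩ := exists_dist_le_knnDist (x := x) le_rfl (hk.trans hkP)
  ⟨p, hp, hpx.trans (knnDist_one_le_kdist hk hkP)⟩

/-- Markov's inequality for the `2m` nearest squared distances: fewer than `m` of them can
exceed twice their mean. -/
theorem knnDist_le_sqrt_two_mul_kdist {m : ℕ} (hm : 1 ≤ m) (hmP : 2 * m ≤ #P) :
    knnDist P m x ≤ √2 * kdist P (2 * m) x := by
  by_contra! hlt
  have hsq : 2 * kdist P (2 * m) x ^ 2 < knnDist P m x ^ 2 := by
    have := pow_lt_pow_left₀ hlt (mul_nonneg (Real.sqrt_nonneg 2) (kdist_nonneg P _ x)) two_ne_zero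
    rwa [mul_pow, Real.sq_sqrt zero_le_two] at this
  have htail : #(Ico (m - 1) (2 * m)) • knnDist P m x ^ 2
      ≤ ∑ l ∈ range (2 * m), knnDist P (l + 1) x ^ 2 := by
    refine (card_nsmul_le_sum _ _ _ fun l hl => ?_).trans
      (sum_le_sum_of_subset_of_nonneg (fun l hl => mem_range.mpr (mem_Ico.mp hl).2)
        fun _ _ _ => sq_nonneg _)
    have hl := mem_Ico.mp hl
    exact pow_le_pow_left₀ (knnDist_nonneg P m x) (knnDist_mono hm (by omega) (by omega)) 2
  rw [sum_sq_knnDist_eq hmP, Nat.card_Ico, nsmul_eq_mul,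
    show 2 * m - (m - 1) = m + 1 by omega] at htail
  push_cast at htail
  nlinarith [sq_nonneg (kdist P (2 * m) x)]

theorem kdist_le_kdist_add_of_knnDist_le {d : ℝ} (hd : 0 ≤ d) (hcard : min k #P ≤ min k #P')
    (h : ∀ l < min k #P, knnDist P (l + 1) x ≤ knnDist P' (l + 1) y + d) :
    kdist P k x ≤ kdist P' k y + d := by
  rw [kdist_eq_sqrt_sum_sq_knnDist P, kdist_eq_sqrt_sum_sq_knnDist P']
  calc _ ≤ √((1 / k) * ∑ l ∈ range (min k #P), knnDist P' (l + 1) y ^ 2) + d :=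
        Real.sqrt_mean_sq_le_of_le_add _ (by simp) hd (fun _ _ => knnDist_nonneg P _ x)
          fun l hl => h l (mem_range.mp hl)
    _ ≤ _ := by gcongr

theorem kdist_le_kdist_add_dist (P : Finset X) (k : ℕ) (x y : X) :
    kdist P k y ≤ kdist P k x + dist x y :=
  kdist_le_kdist_add_of_knnDist_le dist_nonneg le_rfl fun l hl =>
    (knnDist_le_iff (by omega) (by omega) _).mpr
      ((le_nearCount_knnDist (by omega)).trans (nearCount_le_nearCount_add_dist P x y _))

theorem kdist_le_kdist_of_subset (h : P' ⊆ P) (hkP' : k ≤ #P') :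
    kdist P k x ≤ kdist P' k x := by
  have hkP : k ≤ #P := hkP'.trans (card_le_card h)
  simpa using kdist_le_kdist_add_of_knnDist_le (x := x) (y := x) le_rfl
    (by rw [min_eq_left hkP, min_eq_left hkP']) fun l hl => by
      obtain ⟨hlk, -⟩ := lt_min_iff.mp hl
      rw [add_zero]
      exact (knnDist_le_iff (by omega) (by omega) _).mpr
        ((le_nearCount_knnDist (P := P') (by omega)).trans (nearCount_mono_set h x _))

def ContainsNearest (P' P : Finset X) (k : ℕ) (x : X) : Prop :=
  ∀ p ∈ P, dist x p ≤ knnDist P k x → p ∈ P'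

theorem ContainsNearest.nearCount_le {r : ℝ} (h : ContainsNearest P' P k x)
    (hr : r ≤ knnDist P k x) : nearCount P x r ≤ nearCount P' x r :=
  card_le_card fun p hp => by
    rw [mem_filter] at hp ⊢
    exact ⟨h p hp.1 (hp.2.trans hr), hp.2⟩

theorem ContainsNearest.le_card (h : ContainsNearest P' P k x) (hkP : k ≤ #P) : k ≤ #P' :=
  ((le_nearCount_knnDist hkP).trans (h.nearCount_le le_rfl)).trans (nearCount_le_card _ _ _)

theorem ContainsNearest.kdist_le (h : ContainsNearest P' P k x) (hsub : P' ⊆ P)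
    (hkP : k ≤ #P) : kdist P' k x ≤ kdist P k x := by
  have hcard := card_le_card hsub
  simpa using kdist_le_kdist_add_of_knnDist_le (x := x) (y := x) le_rfl (min_le_min_left k hcard)
    fun l hl => by
      obtain ⟨hlk, hlP'⟩ := lt_min_iff.mp hl
      have hlk' : l + 1 ≤ k := hlk
      rw [add_zero]
      exact (knnDist_le_iff (by omega) (by omega) _).mpr
        ((le_nearCount_knnDist (P := P) (by omega)).trans
          (h.nearCount_le (knnDist_mono (Nat.le_add_left 1 l) hlk' hkP)))

end KDistance

section Declutter

variable {α : Type*} {d : α → α → ℝ} {f : α → ℝ}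

theorem declutterAux_eq_append (d : α → α → ℝ) (f : α → ℝ) (Q₀ rest : List α) :
    ∃ R, R.Sublist rest ∧ declutterAux d f Q₀ rest = Q₀ ++ R := by
  induction rest generalizing Q₀ with
  | nil => exact ⟨[], List.Sublist.slnil, by simp [declutterAux]⟩
  | cons p rest ih =>
    by_cases h : ∀ q ∈ Q₀, 2 * f p ≤ d p q
    · obtain ⟨R, hR, hQ⟩ := ih (Q₀ ++ [p])
      exact ⟨p :: R, hR.cons_cons p, by rw [declutterAux, if_pos h, hQ]; simp⟩
    · obtain ⟨R, hR, hQ⟩ := ih Q₀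
      exact ⟨R, hR.cons p, by rw [declutterAux, if_neg h, hQ]⟩

theorem mem_declutterAux_of_mem {Q₀ : List α} (rest : List α) {q : α} (hq : q ∈ Q₀) :
    q ∈ declutterAux d f Q₀ rest := by
  obtain ⟨R, -, hQ⟩ := declutterAux_eq_append d f Q₀ rest
  exact hQ ▸ List.mem_append_left R hq

theorem declutterAux_pairwise {Q₀ : List α} (rest : List α)
    (hQ₀ : Q₀.Pairwise fun a b => 2 * f b ≤ d b a) :
    (declutterAux d f Q₀ rest).Pairwise fun a b => 2 * f b ≤ d b a := by
  induction rest generalizing Q₀ with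
  | nil => simpa [declutterAux]
  | cons p rest ih =>
    by_cases h : ∀ q ∈ Q₀, 2 * f p ≤ d p q
    · rw [declutterAux, if_pos h]
      refine ih (List.pairwise_append.mpr ⟨hQ₀, List.pairwise_singleton _ _, ?_⟩)
      intro q hq b hb
      exact List.mem_singleton.mp hb ▸ h q hq
    · rw [declutterAux, if_neg h]
      exact ih hQ₀

theorem IsDeclutterOutput.mem {P : Finset α} {Q : List α} (h : IsDeclutterOutput d f P Q)
    {q : α} (hq : q ∈ Q) : q ∈ P := by
  obtain ⟨L, hperm, -, rfl⟩ := h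
  obtain ⟨R, hR, hQ⟩ := declutterAux_eq_append d f [] L
  rw [declutter, hQ, List.nil_append] at hq
  exact Finset.mem_toList.mp (hperm.subset (hR.subset hq))

theorem IsDeclutterOutput.separated {P : Finset α} {Q : List α}
    (h : IsDeclutterOutput d f P Q) {q q' : α} (hq : q ∈ Q) (hq' : q' ∈ Q) (hlt : f q' < f q) :
    2 * f q ≤ d q q' := by
  obtain ⟨L, -, hsorted, rfl⟩ := h
  obtain ⟨R, hR, hQ⟩ := declutterAux_eq_append d f [] L
  have hsep := declutterAux_pairwise (d := d) (f := f) L List.Pairwise.nil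
  rw [hQ, List.nil_append] at hsep
  rw [declutter, hQ, List.nil_append] at hq hq'
  let S : α → α → Prop := fun a b =>
    (f a ≤ f b ∧ 2 * f b ≤ d b a) ∨ (f b ≤ f a ∧ 2 * f a ≤ d a b)
  have : Std.Symm S := ⟨fun _ _ => Or.symm⟩
  have hS : R.Pairwise S := ((hsorted.sublist hR).and hsep).imp Or.inl
  rcases hS.forall hq' hq (fun heq => hlt.ne (heq ▸ rfl)) with ⟨-, hqq'⟩ | ⟨hle, -⟩
  · exact hqq'
  · exact absurd hle (not_le.mpr hlt)

end Declutter

section DeclutterCover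

variable {f : X → ℝ}

theorem declutterAux_exists_near (hf : ∀ z, 0 ≤ f z) {Q₀ rest : List X}
    (hrest : rest.Pairwise fun a b => f a ≤ f b) (hcross : ∀ q ∈ Q₀, ∀ p ∈ rest, f q ≤ f p) :
    ∀ p ∈ rest, ∃ q ∈ declutterAux (fun a b => dist a b) f Q₀ rest,
      dist p q ≤ 2 * f p ∧ f q ≤ f p := by
  induction rest generalizing Q₀ with
  | nil => simp
  | cons a rest ih =>
    intro p hp
    obtain ⟨ha, hrest⟩ := List.pairwise_cons.mp hrest
    by_cases h : ∀ q ∈ Q₀, 2 * f a ≤ dist a q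
    · rw [declutterAux, if_pos h]
      rcases List.mem_cons.mp hp with rfl | hp
      · exact ⟨p, mem_declutterAux_of_mem rest
          (List.mem_append_right _ (List.mem_singleton_self p)), by simpa using hf p, le_rfl⟩
      · refine ih hrest (fun q hq b hb => ?_) p hp
        rcases List.mem_append.mp hq with hq | hq
        · exact hcross q hq b (List.mem_cons_of_mem a hb)
        · exact List.mem_singleton.mp hq ▸ ha b hb
    · rw [declutterAux, if_neg h]
      rcases List.mem_cons.mp hp with rfl | hp
      · simp only [not_forall, not_le] at h
        obtain ⟨q, hq, hpq⟩ := h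
        exact ⟨q, mem_declutterAux_of_mem rest hq, hpq.le, hcross q hq p List.mem_cons_self⟩
      · exact ih hrest (fun q hq b hb => hcross q hq b (List.mem_cons_of_mem a hb)) p hp

theorem IsDeclutterOutput.exists_near {P : Finset X} {Q : List X}
    (h : IsDeclutterOutput (fun a b => dist a b) f P Q) (hf : ∀ z, 0 ≤ f z) {p : X}
    (hp : p ∈ P) : ∃ q ∈ Q, dist p q ≤ 2 * f p ∧ f q ≤ f p := by
  obtain ⟨L, hperm, hsorted, rfl⟩ := h
  exact declutterAux_exists_near hf hsorted (by simp) p (hperm.mem_iff.mpr (mem_toList.mpr hp))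

end DeclutterCover

section ParfreeStep

variable {P Pi Pi' : Finset X} {Q : List X} {k m : ℕ} {x : X} {ε : ℝ}

theorem IsParfreeStep.subset (h : IsParfreeStep Pi Pi' k) : Pi' ⊆ Pi := by
  obtain ⟨Q, -, rfl⟩ := h
  exact filter_subset _ _

theorem IsDeclutterOutput.exists_near_of_containsNearest
    (hQ : IsDeclutterOutput (fun a b => dist a b) (kdist Pi k) Pi Q) (hsub : Pi ⊆ P)
    (hx : ContainsNearest Pi P k x) (hk : 1 ≤ k) (hkP : k ≤ #P) :
    ∃ q ∈ Q, dist x q ≤ 5 * kdist P k x ∧ kdist Pi k q ≤ 2 * kdist P k x := by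
  have hκ : kdist Pi k x ≤ kdist P k x := hx.kdist_le hsub hkP
  obtain ⟨p, hp, hxp⟩ := exists_dist_le_kdist (x := x) hk (hx.le_card hkP)
  have hkp : kdist Pi k p ≤ 2 * kdist P k x := by linarith [kdist_le_kdist_add_dist Pi k x p]
  obtain ⟨q, hq, hpq, hqp⟩ := hQ.exists_near (kdist_nonneg Pi k) hp
  exact ⟨q, hq, by linarith [dist_triangle x p q], hqp.trans hkp⟩

theorem IsParfreeStep.containsNearest (hstep : IsParfreeStep Pi Pi' (2 * m)) (hsub : Pi ⊆ P)
    (hm : 1 ≤ m) (hmP : 2 * m ≤ #P) (hx : ContainsNearest Pi P (2 * m) x)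
    (hxε : kdist P (2 * m) x ≤ ε) (hlow : ∀ p ∈ P, ε / 2 ≤ kdist P (2 * m) p) :
    ContainsNearest Pi' P m x := by
  obtain ⟨Q, hQ, rfl⟩ := hstep
  intro p hp hpx
  obtain ⟨q, hq, hxq, -⟩ := hQ.exists_near_of_containsNearest hsub hx (by omega) hmP
  have hpx' : dist x p ≤ √2 * ε :=
    hpx.trans ((knnDist_le_sqrt_two_mul_kdist hm hmP).trans (by gcongr))
  have hqlow : ε / 2 ≤ kdist Pi (2 * m) q :=
    (hlow q (hsub (hQ.mem hq))).trans (kdist_le_kdist_of_subset hsub (hx.le_card hmP))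
  refine mem_filter.mpr ⟨hx p hp (hpx.trans (knnDist_mono hm (by omega) hmP)), q, hq, ?_⟩
  calc dist p q ≤ dist x p + dist x q := dist_triangle_left p q x
    _ ≤ (10 + 2 * √2) * (ε / 2) := by linarith
    _ ≤ (10 + 2 * √2) * kdist Pi (2 * m) q := by gcongr

theorem IsDeclutterOutput.kdist_le_of_noisySample {K : Set X}
    (hQ : IsDeclutterOutput (fun a b => dist a b) (kdist Pi k) Pi Q) (hK : IsCompact K)
    (hKne : K.Nonempty) (hsub : Pi ⊆ P) (hk : 1 ≤ k) (hkP : k ≤ #P)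
    (hnear : ∀ x ∈ K, ContainsNearest Pi P k x) (hsample : NoisySample P k K ε) :
    ∀ q ∈ Q, kdist Pi k q ≤ 6 * ε := by
  intro q hq
  obtain ⟨x, hxK, hqx⟩ := hK.exists_infDist_eq_dist hKne q
  obtain ⟨q₀, hq₀, hxq₀, hq₀κ⟩ :=
    hQ.exists_near_of_containsNearest hsub (hnear x hxK) hk hkP
  have hκ := hsample.1 x hxK
  have hqK : dist q x ≤ kdist Pi k q + ε := hqx ▸ (hsample.2 q).trans
    (by linarith [kdist_le_kdist_of_subset (x := q) hsub ((hnear x hxK).le_card hkP)])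
  by_contra! hbig
  have hsep := hQ.separated hq hq₀ (by linarith [kdist_nonneg P k x])
  linarith [dist_triangle q x q₀]

theorem IsParfreeStep.infDist_le {K : Set X} (hstep : IsParfreeStep Pi Pi' k)
    (hK : IsCompact K) (hKne : K.Nonempty) (hsub : Pi ⊆ P) (hk : 1 ≤ k) (hkP : k ≤ #P)
    (hnear : ∀ x ∈ K, ContainsNearest Pi P k x) (hsample : NoisySample P k K ε) :
    ∀ p ∈ Pi', infDist p K ≤ (67 + 12 * √2) * ε := by
  obtain ⟨Q, hQ, rfl⟩ := hstep
  intro p hp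
  obtain ⟨-, q, hq, hpq⟩ := mem_filter.mp hp
  obtain ⟨x, hx⟩ := hKne
  have hη := hQ.kdist_le_of_noisySample hK ⟨x, hx⟩ hsub hk hkP hnear hsample q hq
  have hqK : infDist q K ≤ kdist Pi k q + ε := (hsample.2 q).trans
    (by linarith [kdist_le_kdist_of_subset (x := q) hsub ((hnear x hx).le_card hkP)])
  calc infDist p K ≤ infDist q K + dist p q := infDist_le_infDist_add_dist
    _ ≤ (11 + 2 * √2) * kdist Pi k q + ε := by linarith
    _ ≤ (11 + 2 * √2) * (6 * ε) + ε := by gcongr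
    _ = (67 + 12 * √2) * ε := by ring

theorem IsParfreeStep.exists_dense_center {c : X} {ρ : ℝ} (hstep : IsParfreeStep Pi Pi' (2 * m))
    (hm : 1 ≤ m) (hc : c ∈ Pi) (hcount : 2 * m ≤ nearCount Pi c ρ) :
    ∃ c' ∈ Pi', ∃ ρ', dist c c' + 3 * ρ' ≤ 3 * ρ ∧ m ≤ nearCount Pi' c' ρ' := by
  obtain ⟨Q, hQ, rfl⟩ := hstep
  have hκc : kdist Pi (2 * m) c ≤ ρ := kdist_le_of_le_nearCount (by omega) hcount
  obtain ⟨q, hq, hcq, -⟩ := hQ.exists_near (kdist_nonneg Pi _) hc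
  have hsurvive : ∀ c' r, (∀ p, dist c' p ≤ r → dist p q ≤ (10 + 2 * √2) * kdist Pi (2 * m) q) →
      nearCount Pi c' r ≤ nearCount (Pi.filter fun p => ∃ q ∈ Q,
        dist p q ≤ (10 + 2 * √2) * kdist Pi (2 * m) q) c' r := fun c' r h =>
    card_le_card fun p hp => by
      rw [mem_filter] at hp ⊢
      exact ⟨mem_filter.mpr ⟨hp.1, q, hq, h p hp.2⟩, hp.2⟩
  by_cases hwide : ρ + 2 * kdist Pi (2 * m) c ≤ (10 + 2 * √2) * kdist Pi (2 * m) q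
  · refine ⟨c, mem_filter.mpr ⟨hc, q, hq, ?_⟩, ρ, by simp, ?_⟩
    · linarith [kdist_nonneg Pi (2 * m) c]
    · refine (hcount.trans' (by omega)).trans (hsurvive c ρ fun p hp => ?_)
      linarith [dist_triangle_left p q c]
  · -- `(10 + 2√2) κ(q) < 3ρ` and `9√2 ≤ 10 + 2√2`
    have hs := Real.sq_sqrt (zero_le_two : (0 : ℝ) ≤ 2)
    have hκq := kdist_nonneg Pi (2 * m) q
    have hsmall : 3 * (√2 * kdist Pi (2 * m) q) ≤ ρ := by
      nlinarith [Real.sqrt_nonneg 2, mul_nonneg (Real.sqrt_nonneg 2) hκq]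
    have h2mPi : 2 * m ≤ #Pi := hcount.trans (nearCount_le_card _ _ _)
    refine ⟨q, mem_filter.mpr ⟨hQ.mem hq, q, hq, by rw [dist_self]; positivity⟩,
      √2 * kdist Pi (2 * m) q, by linarith, ?_⟩
    refine ((knnDist_le_iff hm (by omega) _).mp
      (knnDist_le_sqrt_two_mul_kdist hm h2mPi)).trans (hsurvive q _ fun p hp => ?_)
    rw [dist_comm]
    nlinarith [Real.sqrt_nonneg 2]

end ParfreeStep

theorem ContainsNearest.exists_dense_center {P P' : Finset X} {m : ℕ} {x : X}
    (h : ContainsNearest P' P m x) (hm : 1 ≤ m) (hmP : 2 * m ≤ #P) :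
    ∃ c ∈ P', dist x c ≤ kdist P (2 * m) x ∧
      m ≤ nearCount P' c ((1 + √2) * kdist P (2 * m) x) := by
  obtain ⟨c, hc, hxc⟩ := exists_dist_le_knnDist (P := P) (x := x) le_rfl (by omega)
  have hxc' : dist x c ≤ kdist P (2 * m) x := hxc.trans (knnDist_one_le_kdist (by omega) hmP)
  refine ⟨c, h c hc (hxc.trans (knnDist_mono le_rfl hm (by omega))), hxc', ?_⟩
  calc m ≤ nearCount P x (knnDist P m x) := le_nearCount_knnDist (by omega)
    _ ≤ nearCount P' x (knnDist P m x) := h.nearCount_le le_rfl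
    _ ≤ nearCount P' c (knnDist P m x + dist x c) := nearCount_le_nearCount_add_dist _ _ _ _
    _ ≤ nearCount P' c ((1 + √2) * kdist P (2 * m) x) :=
      nearCount_mono (by linarith [knnDist_le_sqrt_two_mul_kdist (x := x) hm hmP])

section ParfreeIteration

variable {Pseq : ℕ → Finset X} {N : ℕ}

theorem parfree_subset_of_le
    (hstep : ∀ i, 1 ≤ i → i ≤ N → IsParfreeStep (Pseq i) (Pseq (i - 1)) (2 ^ i))
    {j m : ℕ} (hjm : j ≤ m) (hmN : m ≤ N) : Pseq j ⊆ Pseq m := by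
  induction m, hjm using Nat.le_induction with
  | base => exact subset_rfl
  | succ m hjm ih => exact (ih (by omega)).trans (hstep (m + 1) (by omega) hmN).subset

theorem parfree_containsNearest {P : Finset X} {K : Set X} {ε : ℕ → ℝ}
    (hstep : ∀ i, 1 ≤ i → i ≤ N → IsParfreeStep (Pseq i) (Pseq (i - 1)) (2 ^ i))
    (hstart : Pseq N = P) (hNP : 2 ^ N ≤ #P) {j : ℕ} (hjN : j ≤ N)
    (hlevel : ∀ i, j < i → i ≤ N →
      (∀ x ∈ K, kdist P (2 ^ i) x ≤ ε i) ∧ ∀ p ∈ P, ε i / 2 ≤ kdist P (2 ^ i) p) :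
    ∀ x ∈ K, ContainsNearest (Pseq j) P (2 ^ j) x := by
  induction hjN using Nat.decreasingInduction with
  | self => exact fun x _ p hp _ => hstart ▸ hp
  | of_succ j hjN ih =>
    have hstepj := hstep (j + 1) (by omega) hjN
    obtain ⟨hup, hlow⟩ := hlevel (j + 1) (by omega) hjN
    rw [Nat.add_sub_cancel, pow_succ'] at hstepj
    rw [pow_succ'] at hup hlow
    have hjP : 2 * 2 ^ j ≤ #P := by
      rw [← pow_succ']; exact (Nat.pow_le_pow_right two_pos hjN).trans hNP
    have hnear := ih fun i hi => hlevel i (by omega)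
    rw [pow_succ'] at hnear
    exact fun x hx => hstepj.containsNearest (hstart ▸ parfree_subset_of_le hstep hjN le_rfl)
      Nat.one_le_two_pow hjP (hnear x hx) (hup x hx) hlow

theorem parfree_exists_near_of_dense
    (hstep : ∀ i, 1 ≤ i → i ≤ N → IsParfreeStep (Pseq i) (Pseq (i - 1)) (2 ^ i))
    {j : ℕ} (hjN : j ≤ N) {c : X} (hc : c ∈ Pseq j) {ρ : ℝ}
    (hcount : 2 ^ j ≤ nearCount (Pseq j) c ρ) : ∃ c' ∈ Pseq 0, dist c c' ≤ 3 * ρ := by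
  induction j generalizing c ρ with
  | zero =>
    have hρ : 0 ≤ ρ := (kdist_nonneg _ 1 c).trans (kdist_le_of_le_nearCount le_rfl hcount)
    exact ⟨c, hc, by rw [dist_self]; positivity⟩
  | succ j ih =>
    have hstepj := hstep (j + 1) (by omega) hjN
    rw [Nat.add_sub_cancel, pow_succ'] at hstepj
    rw [pow_succ'] at hcount
    obtain ⟨c', hc', ρ', hcc', hcount'⟩ :=
      hstepj.exists_dense_center Nat.one_le_two_pow hc hcount
    obtain ⟨c'', hc'', hc'c''⟩ := ih (by omega) hc' hcount'
    exact ⟨c'', hc'', by linarith [dist_triangle c c' c'']⟩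

end ParfreeIteration

theorem parfree_declutter_guarantee_general (P : Finset X)
    (K : Set X) (hK : IsCompact K) (hKne : K.Nonempty)
    (i₀ istar : ℕ) (hi₀ : 1 ≤ i₀) (hi₀star : i₀ ≤ istar)
    (histar : istar = Nat.log 2 P.card)
    (ε : ℕ → ℝ)
    -- for all i₀ < i ≤ i*, P is a weak (ε_{2^i}, 2)-uniform noisy sample of K:
    (hweak : ∀ i, i₀ < i → i ≤ istar →
      (∀ x ∈ K, kdist P (2 ^ i) x ≤ ε i) ∧ ∀ p ∈ P, ε i / 2 ≤ kdist P (2 ^ i) p)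
    -- P is a (ε_{2^{i₀}}, 2)-uniform noisy sample of K:
    (huni1 : NoisySample P (2 ^ i₀) K (ε i₀))
    (huni3 : ∀ p ∈ P, ε i₀ / 2 ≤ kdist P (2 ^ i₀) p)
    -- the ParfreeDeclutter iteration:
    (Pseq : ℕ → Finset X) (hstart : Pseq istar = P)
    (hstep : ∀ i, 1 ≤ i → i ≤ istar → IsParfreeStep (Pseq i) (Pseq (i - 1)) (2 ^ i)) :
    hausdorffDist (↑(Pseq 0) : Set X) K ≤ (87 + 16 * Real.sqrt 2) * ε i₀ := by
  have hNP : 2 ^ istar ≤ #P := histar ▸ Nat.pow_log_le_self 2 fun h => by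
    rw [h, Nat.log_zero_right] at histar; omega
  have hi₀P : 2 ^ i₀ ≤ #P := (Nat.pow_le_pow_right two_pos hi₀star).trans hNP
  have hnear : ∀ j, i₀ - 1 ≤ j → j ≤ istar → ∀ x ∈ K, ContainsNearest (Pseq j) P (2 ^ j) x :=
    fun j hj hjN => parfree_containsNearest hstep hstart hNP hjN fun i hi hiN => by
      rcases (show i = i₀ ∨ i₀ < i by omega) with rfl | hlt
      · exact ⟨huni1.1, huni3⟩
      · exact hweak i hlt hiN
  obtain ⟨x₀, hx₀⟩ := hKne
  have hε : 0 ≤ ε i₀ := (kdist_nonneg P _ x₀).trans (huni1.1 x₀ hx₀)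
  have hupper : ∀ p ∈ Pseq 0, infDist p K ≤ (67 + 12 * √2) * ε i₀ := fun p hp =>
    (hstep i₀ hi₀ hi₀star).infDist_le hK ⟨x₀, hx₀⟩
      (hstart ▸ parfree_subset_of_le hstep hi₀star le_rfl)
      Nat.one_le_two_pow hi₀P (hnear i₀ (by omega) hi₀star) huni1 p
      (parfree_subset_of_le hstep (Nat.zero_le _) (by omega) hp)
  have hlower : ∀ x ∈ K, ∃ c ∈ Pseq 0, dist x c ≤ (4 + 3 * √2) * ε i₀ := by
    intro x hx
    have h2 : 2 * 2 ^ (i₀ - 1) = 2 ^ i₀ := by rw [← pow_succ', Nat.sub_add_cancel hi₀]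
    obtain ⟨c, hc, hxc, hcount⟩ := (hnear (i₀ - 1) le_rfl (by omega) x hx).exists_dense_center
      Nat.one_le_two_pow (h2 ▸ hi₀P)
    obtain ⟨c', hc', hcc'⟩ := parfree_exists_near_of_dense hstep (by omega) hc hcount
    rw [h2] at hxc hcc'
    have hκ := huni1.1 x hx
    refine ⟨c', hc', ?_⟩
    nlinarith [dist_triangle x c c', Real.sqrt_nonneg 2]
  refine hausdorffDist_le_of_infDist (mul_nonneg (by positivity) hε) (fun p hp => ?_) fun x hx => ?_
  · exact (hupper p hp).trans (by nlinarith [Real.sqrt_nonneg 2])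
  · obtain ⟨c, hc, hxc⟩ := hlower x hx
    exact (infDist_le_dist_of_mem (mem_coe.mpr hc)).trans
      (hxc.trans (by nlinarith [Real.sqrt_nonneg 2]))

/-- Guarantee for the parameter-free algorithm ParfreeDeclutter: if P is a weak
(ε_{2^i}, 2)-uniform noisy sample of K for all i > i₀ (up to i* = ⌊log₂ |P|⌋) and a genuine
(ε_{2^{i₀}}, 2)-uniform noisy sample of K, then the final output P₀ satisfies
δ_H(P₀, K) ≤ (87 + 16√2) ε_{2^{i₀}}. -/
theorem parfree_declutter_guarantee (P : Finset X) (hP : P.Nonempty)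
    (K : Set X) (hK : IsCompact K) (hKne : K.Nonempty)
    (i₀ istar : ℕ) (hi₀ : 1 ≤ i₀) (hi₀star : i₀ ≤ istar)
    (histar : istar = Nat.log 2 P.card)
    (ε : ℕ → ℝ)
    -- for all i₀ < i ≤ i*, P is a weak (ε_{2^i}, 2)-uniform noisy sample of K:
    (hweak : ∀ i, i₀ < i → i ≤ istar →
      (∀ x ∈ K, kdist P (2 ^ i) x ≤ ε i) ∧ ∀ p ∈ P, ε i / 2 ≤ kdist P (2 ^ i) p)
    -- P is a (ε_{2^{i₀}}, 2)-uniform noisy sample of K: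
    (huni1 : NoisySample P (2 ^ i₀) K (ε i₀))
    (huni3 : ∀ p ∈ P, ε i₀ / 2 ≤ kdist P (2 ^ i₀) p)
    -- the ParfreeDeclutter iteration:
    (Pseq : ℕ → Finset X) (hstart : Pseq istar = P)
    (hstep : ∀ i, 1 ≤ i → i ≤ istar → IsParfreeStep (Pseq i) (Pseq (i - 1)) (2 ^ i)) :
    hausdorffDist (↑(Pseq 0) : Set X) K ≤ (87 + 16 * Real.sqrt 2) * ε i₀ :=
  parfree_declutter_guarantee_general P K hK hKne i₀ istar hi₀ hi₀star histar ε hweak huni1 huni3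
    Pseq hstart hstep
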